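/- arXiv:2101.05905 — 2 statements merged into one kernel-verified Lean document; each statement's English description precedes it below -/
import Mathlib

section
/- Finite-rank free groups are Hopfian: every surjective group homomorphism from a free group of finite rank to itself is an isomorphism. -/
/-!
Mal'cev's argument: if `f : G →* G` is surjective and `f x = 1`, then precomposition with `f`
is an injective, hence surjective, self-map of the finite set of homomorphisms from the finitely
generated group `G` to any finite group `Q`, so every such homomorphism kills `x`. If `G` is
residually finite, this forces `x = 1`.

A free group is residually finite: a nontrivial reduced word `w` acts on its own set of suffixes,
each letter prepending itself, so that `w` moves the empty suffix to `w`.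
-/

open Function List Equiv

instance MonoidHom.finite_of_fg {G Q : Type*} [Group G] [Group Q] [Group.FG G] [Finite Q] :
    Finite (G →* Q) := by
  obtain ⟨S, hS, hSfin⟩ := Group.fg_iff.mp ‹Group.FG G›
  have := hSfin.to_subtype
  exact Finite.of_injective (fun ψ : G →* Q => fun s : S => ψ s) fun _ _ h =>
    MonoidHom.eq_of_eqOn_dense hS fun s hs => congr_fun h ⟨s, hs⟩

theorem Group.ResiduallyFinite.injective_of_surjective {G : Type*} [Group G] [Group.FG G]
    [Group.ResiduallyFinite G] {f : G →* G} (hf : Surjective f) : Injective f := by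
  refine (injective_iff_map_eq_one f).mpr fun x hx => by_contra fun hx1 => ?_
  obtain ⟨H, hxH⟩ := Group.exists_finiteIndexNormalSubgroup_notMem x hx1
  have hcomp : Injective fun ψ : G →* G ⧸ H.toSubgroup => ψ.comp f :=
    fun _ _ => (MonoidHom.cancel_right hf).mp
  obtain ⟨ψ, hψ⟩ := Finite.injective_iff_surjective.mp hcomp (QuotientGroup.mk' H.toSubgroup)
  apply hxH
  rw [← FiniteIndexNormalSubgroup.mem_toSubgroup_iff, ← QuotientGroup.eq_one_iff,
    ← QuotientGroup.mk'_apply, ← hψ, MonoidHom.comp_apply, hx, map_one]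

instance List.finite_subtype_isSuffix {β : Type*} (w : List β) : Finite {t // t <:+ w} :=
  Set.Finite.to_subtype (s := {t | t <:+ w}) <| by
    simpa only [mem_tails] using w.tails.finite_toSet

namespace FreeGroup

variable {α : Type*} {w : List (α × Bool)}

theorem IsReduced.not_cons_cons_suffix (hw : IsReduced w) (a : α) (b : Bool)
    (t : List (α × Bool)) : ¬(a, b) :: (a, !b) :: t <:+ w := fun h => by
  simpa [isReduced_cons_cons] using hw.infix h.isInfix

/-- Vertices of the path spelled by `w` are its suffixes, and the letter `(a, b)` of `w` in front
of the suffix `t` is an `a`-edge oriented from `t` to `(a, b) :: t` if `b`, and backwards otherwise.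
Reducedness of `w` makes these partial maps injective, so they extend to permutations `σ a` under
which every letter `x` sends `t` to `x :: t`. -/
def WordEdge (w : List (α × Bool)) (a : α) :=
  {e : Bool × List (α × Bool) // (a, e.1) :: e.2 <:+ w}

variable {a : α}

def WordEdge.source : WordEdge w a → {t // t <:+ w}
  | ⟨(true, t), h⟩ => ⟨t, (suffix_cons _ t).trans h⟩
  | ⟨(false, t), h⟩ => ⟨(a, false) :: t, h⟩

def WordEdge.target : WordEdge w a → {t // t <:+ w}
  | ⟨(true, t), h⟩ => ⟨(a, true) :: t, h⟩
  | ⟨(false, t), h⟩ => ⟨t, (suffix_cons _ t).trans h⟩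

theorem WordEdge.source_injective (hw : IsReduced w) : Injective (source (w := w) (a := a)) := by
  rintro ⟨⟨_ | _, t⟩, h⟩ ⟨⟨_ | _, t'⟩, h'⟩ heq <;>
    simp only [source, Subtype.mk.injEq, cons.injEq, true_and] at heq <;> subst heq
  · rfl
  · exact (hw.not_cons_cons_suffix a true _ h').elim
  · exact (hw.not_cons_cons_suffix a true _ h).elim
  · rfl

theorem WordEdge.target_injective (hw : IsReduced w) : Injective (target (w := w) (a := a)) := by
  rintro ⟨⟨_ | _, t⟩, h⟩ ⟨⟨_ | _, t'⟩, h'⟩ heq <;>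
    simp only [target, Subtype.mk.injEq, cons.injEq, true_and] at heq <;> subst heq
  · rfl
  · exact (hw.not_cons_cons_suffix a false _ h).elim
  · exact (hw.not_cons_cons_suffix a false _ h').elim
  · rfl

theorem exists_perm_cons_suffix (hw : IsReduced w) :
    ∃ σ : α → Perm {t // t <:+ w}, ∀ (x : α × Bool) (t) (h : x :: t <:+ w),
      cond x.2 (σ x.1) (σ x.1)⁻¹ ⟨t, (suffix_cons x t).trans h⟩ = ⟨x :: t, h⟩ := by
  have (a : α) : Finite (WordEdge w a) := .of_injective _ (WordEdge.source_injective hw)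
  choose σ hσ using fun a : α => Perm.exists_extending_pair _ _
    (WordEdge.source_injective (a := a) hw) (WordEdge.target_injective hw)
  refine ⟨σ, fun ⟨a, b⟩ t h => ?_⟩
  cases b
  · exact Perm.inv_eq_iff_eq.mpr (hσ a ⟨(false, t), h⟩).symm
  · exact hσ a ⟨(true, t), h⟩

theorem exists_perm_lift_mk_apply_nil (hw : IsReduced w) :
    ∃ σ : α → Perm {t // t <:+ w},
      lift σ (mk w) ⟨[], nil_suffix⟩ = ⟨w, suffix_refl w⟩ := by
  obtain ⟨σ, hσ⟩ := exists_perm_cons_suffix hw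
  refine ⟨σ, ?_⟩
  rw [lift_mk]
  suffices ∀ L (h : L <:+ w),
      (L.map fun x => cond x.2 (σ x.1) (σ x.1)⁻¹).prod ⟨[], nil_suffix⟩ = ⟨L, h⟩ from
    this w (suffix_refl w)
  intro L
  induction L with
  | nil => intro _; rfl
  | cons x L ih =>
    intro h
    rw [map_cons, prod_cons, Perm.mul_apply, ih ((suffix_cons x L).trans h), hσ]

instance : Group.ResiduallyFinite (FreeGroup α) := by
  classical
  refine Group.residuallyFinite_iff_exists_finiteIndex.mpr fun x hx => ?_
  obtain ⟨σ, hσ⟩ := exists_perm_lift_mk_apply_nil (isReduced_toWord (x := x))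
  refine ⟨(lift σ).ker, Subgroup.finiteIndex_ker _, fun hker => ?_⟩
  rw [mk_toWord, MonoidHom.mem_ker.mp hker] at hσ
  exact hx (toWord_eq_nil_iff.mp (congrArg Subtype.val hσ).symm)

end FreeGroup

/-- Finite-rank free groups are Hopfian: every surjective endomorphism of a
free group of finite rank is an isomorphism (i.e. bijective). -/
theorem stmt1 (n : ℕ) (f : FreeGroup (Fin n) →* FreeGroup (Fin n))
    (hf : Function.Surjective f) : Function.Bijective f :=
  ⟨Group.ResiduallyFinite.injective_of_surjective hf, hf⟩
end

section
/- (Tomaszewski's theorem) For n ≥ 1, the commutator subgroup [Fₙ,Fₙ] of the free group Fₙ on x₁,…,xₙ is freely generated by the set { (x_i^{k_i} x_{i+1}^{k_{i+1}} ⋯ x_n^{k_n})⁻¹ [x_i, x_j] (x_i^{k_i} x_{i+1}^{k_{i+1}} ⋯ x_n^{k_n}) : 1 ≤ i < j ≤ n, k_i, …, k_n ∈ ℤ }. -/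
/-- `S` is a free basis of the subgroup `H` of `G`. -/
def IsFreeBasis {G : Type*} [Group G] (S : Set G) (H : Subgroup G) : Prop :=
  Function.Injective (FreeGroup.lift ((↑) : S → G)) ∧
    (FreeGroup.lift ((↑) : S → G)).range = H

/-- The ordered word `x_i^{k_i} x_{i+1}^{k_{i+1}} ⋯ x_{n-1}^{k_{n-1}}` in the free group
on `Fin n` (exponents given by `k`, only letters with index `≥ i` appear). -/
def tailWord (n : ℕ) (i : Fin n) (k : Fin n → ℤ) : FreeGroup (Fin n) :=
  (((List.finRange n).filter fun l => i ≤ l).map fun l => FreeGroup.of l ^ k l).prod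

/-!
The words `t(a) = x_{n-1}^{a_{n-1}} ⋯ x_0^{a_0}` (`descWord a`) form a Schreier transversal
of `[Fₙ, Fₙ]`, the kernel of the exponent-sum map `Fₙ → ℤⁿ`. Reidemeister–Schreier rewriting
is packaged as a homomorphism `Φ : Fₙ → F(S) ≀ ℤⁿ`, `Φ(x_m) = (a ↦ σ(a, m), e_m)`, where
`σ(a, m) ∈ F(S)` expresses `t(a) x_m t(a + e_m)⁻¹` in the proposed basis `S` and is computed
by reading `t(a)` letter by letter. On `[Fₙ, Fₙ]` the map `w ↦ Φ(w)(0)` is a homomorphism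
to `F(S)` sending each `s ∈ S` to the generator `s` and right inverse to the evaluation
`F(S) → [Fₙ, Fₙ]`, which is therefore an isomorphism. Each of these identities compares two
homomorphisms into a wreath product along `t(a)`, where they agree as soon as they agree on
every `x_j` at all points vanishing below `j`.
-/

open FreeGroup (of lift)
open Multiplicative

theorem IsFreeBasis.of_retraction {G : Type*} [Group G] {S : Set G} {H : Subgroup G}
    (hSH : S ⊆ H) (χ : H →* FreeGroup S) (hχS : ∀ s : S, χ ⟨s, hSH s.2⟩ = of s)
    (hχH : ∀ h : H, lift ((↑) : S → G) (χ h) = h) : IsFreeBasis S H := by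
  set ι' : FreeGroup S →* H := lift fun s => ⟨s, hSH s.2⟩
  have hχι' : χ.comp ι' = MonoidHom.id _ :=
    FreeGroup.ext_hom _ _ fun s => by simp [ι', hχS]
  have hι : lift ((↑) : S → G) = H.subtype.comp ι' :=
    FreeGroup.ext_hom _ _ fun s => by simp [ι']
  refine ⟨fun u v huv => ?_, le_antisymm ?_ fun h hh => ⟨χ ⟨h, hh⟩, hχH ⟨h, hh⟩⟩⟩
  · rw [hι] at huv
    have hinv : Function.LeftInverse χ ι' := DFunLike.congr_fun hχι'
    exact hinv.injective (Subtype.ext huv)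
  · rw [FreeGroup.range_lift_eq_closure, Subtype.range_coe, Subgroup.closure_le]
    exact hSH

def SemidirectProduct.leftHomOfRightEqOne {N K H : Type*} [Group N] [Group K] [Group H]
    {φ : K →* MulAut N} (f : H →* N ⋊[φ] K) (hf : ∀ h, (f h).right = 1) : H →* N where
  toFun h := (f h).left
  map_one' := by simp
  map_mul' a b := by simp [hf]

section Wreath

variable (A : Type*) [AddCommGroup A] (G : Type*) [Group G]

def shiftAut : Multiplicative A →* MulAut (A → G) where
  toFun t :=
    { toFun := fun f x => f (x + t.toAdd)
      invFun := fun f x => f (x - t.toAdd)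
      left_inv := fun f => by simp
      right_inv := fun f => by simp
      map_mul' := fun _ _ => rfl }
  map_one' := by ext; simp
  map_mul' _ _ := by ext; simp [add_assoc]

/-- The unrestricted wreath product `G ≀ A` for the regular action of `A` by translation,
written additively in `A`; unlike Mathlib's `RegularWreathProduct`, the product is
`(p * q).left x = p.left x * q.left (x + p.right)`. -/
abbrev Wreath := (A → G) ⋊[shiftAut A G] Multiplicative A

variable {A G}

namespace Wreath

theorem left_mul (p q : Wreath A G) (x : A) :
    (p * q).left x = p.left x * q.left (x + p.right.toAdd) := rfl

theorem left_inv (p : Wreath A G) (x : A) :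
    p⁻¹.left x = (p.left (x - p.right.toAdd))⁻¹ := by
  simp [SemidirectProduct.inv_left, shiftAut, sub_eq_add_neg]

theorem left_conj {p q : Wreath A G} (hq : q.right = 1) (x : A) :
    (p * q * p⁻¹).left x = p.left x * q.left (x + p.right.toAdd) * (p.left x)⁻¹ := by
  simp [left_mul, left_inv, hq]

def mapLeft {G' : Type*} [Group G'] (f : G →* G') : Wreath A G →* Wreath A G' :=
  SemidirectProduct.map (f.compLeft A) (MonoidHom.id _) fun _ => rfl

@[simp] theorem mapLeft_left {G' : Type*} [Group G'] (f : G →* G') (p : Wreath A G) (x : A) :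
    (mapLeft f p).left x = f (p.left x) := rfl

@[simp] theorem mapLeft_right {G' : Type*} [Group G'] (f : G →* G') (p : Wreath A G) :
    (mapLeft f p).right = p.right := rfl

def diag (ab : G →* Multiplicative A) : G →* Wreath A G where
  toFun g := ⟨fun _ => g, ab g⟩
  map_one' := SemidirectProduct.ext rfl ab.map_one
  map_mul' g h := SemidirectProduct.ext rfl (ab.map_mul g h)

def conjDiag (u : A → G) (ab : G →* Multiplicative A) : G →* Wreath A G :=
  (MulAut.conj (SemidirectProduct.inl u)).toMonoidHom.comp (diag ab)

theorem conjDiag_left (u : A → G) (ab : G →* Multiplicative A) (g : G) (x : A) :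
    (conjDiag u ab g).left x = u x * g * (u (x + (ab g).toAdd))⁻¹ := by
  simp [conjDiag, diag, left_mul, left_inv]

theorem conjDiag_right (u : A → G) (ab : G →* Multiplicative A) (g : G) :
    (conjDiag u ab g).right = ab g := by
  simp [conjDiag, diag]

end Wreath

end Wreath

namespace Tomaszewski

variable {n : ℕ}

def exponentSum (n : ℕ) : FreeGroup (Fin n) →* Multiplicative (Fin n → ℤ) :=
  lift fun l => ofAdd (Pi.single l 1)

@[simp] theorem exponentSum_of (l : Fin n) :
    (exponentSum n (of l)).toAdd = Pi.single l 1 := by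
  simp [exponentSum]

@[simp] theorem exponentSum_of_zpow (l : Fin n) (c : ℤ) :
    (exponentSum n (of l ^ c)).toAdd = Pi.single l c := by
  simp [exponentSum, ← Pi.single_smul]

def vanishingBelow (j : Fin n) : AddSubgroup (Fin n → ℤ) where
  carrier := {x | ∀ l < j, x l = 0}
  add_mem' hx hy l hl := by simp [hx l hl, hy l hl]
  zero_mem' _ _ := rfl
  neg_mem' hx l hl := by simp [hx l hl]

theorem single_mem_vanishingBelow {j l : Fin n} (h : j ≤ l) (c : ℤ) :
    Pi.single l c ∈ vanishingBelow j :=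
  fun _ hl' => by simp [(hl'.trans_le h).ne]

theorem vanishingBelow_anti {i j : Fin n} (h : i ≤ j) : vanishingBelow j ≤ vanishingBelow i :=
  fun _ hx l hl => hx l (hl.trans_le h)

def descWord (a : Fin n → ℤ) : FreeGroup (Fin n) :=
  ((List.finRange n).reverse.map fun l => of l ^ a l).prod

theorem descWord_zero : descWord (0 : Fin n → ℤ) = 1 :=
  List.prod_eq_one fun _ hx => by
    obtain ⟨l, -, rfl⟩ := List.mem_map.1 hx
    simp

@[simp] theorem exponentSum_descWord (a : Fin n → ℤ) :
    exponentSum n (descWord a) = ofAdd a := by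
  simp only [descWord, map_list_prod, List.map_reverse, List.prod_reverse, List.map_map,
    ← Fin.prod_univ_def]
  apply toAdd.injective
  rw [toAdd_prod]
  simp only [Function.comp_apply, exponentSum_of_zpow, toAdd_ofAdd]
  exact Finset.univ_sum_single a

theorem finRange_eq_append (i : Fin n) :
    ∃ s t, List.finRange n = s ++ i :: t ∧ (∀ l ∈ s, l < i) ∧ ∀ l ∈ t, i < l := by
  obtain ⟨s, t, hst⟩ := List.append_of_mem (List.mem_finRange i)
  have hsorted := List.pairwise_lt_finRange n
  rw [hst, List.pairwise_append, List.pairwise_cons] at hsorted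
  exact ⟨s, t, hst, fun l hl => hsorted.2.2 l hl i List.mem_cons_self, hsorted.2.1.1⟩

theorem descWord_eq_of_finRange_eq {s t : List (Fin n)} {i : Fin n}
    (hst : List.finRange n = s ++ i :: t) (a : Fin n → ℤ) :
    descWord a = (t.reverse.map fun l => of l ^ a l).prod * of i ^ a i *
      (s.reverse.map fun l => of l ^ a l).prod := by
  simp [descWord, hst, mul_assoc]

theorem prod_map_zpow_eq_one {L : List (Fin n)} {a : Fin n → ℤ} (h : ∀ l ∈ L, a l = 0) :
    (L.map fun l => of l ^ a l).prod = 1 :=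
  List.prod_eq_one fun _ hx => by
    obtain ⟨l, hl, rfl⟩ := List.mem_map.1 hx
    simp [h l hl]

theorem descWord_add_single {i : Fin n} {a : Fin n → ℤ} (ha : a ∈ vanishingBelow i) (c : ℤ) :
    descWord (a + Pi.single i c) = descWord a * of i ^ c := by
  obtain ⟨s, t, hst, hs, ht⟩ := finRange_eq_append i
  have hupper : (t.reverse.map fun l => of l ^ (a + Pi.single i c : Fin n → ℤ) l) =
      t.reverse.map fun l => of l ^ a l :=
    List.map_congr_left fun l hl => by simp [(ht l (List.mem_reverse.1 hl)).ne']
  have hlower (b : Fin n → ℤ) (hb : b ∈ vanishingBelow i) :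
      (s.reverse.map fun l => of l ^ b l).prod = 1 :=
    prod_map_zpow_eq_one fun l hl => hb l (hs l (List.mem_reverse.1 hl))
  rw [descWord_eq_of_finRange_eq hst, descWord_eq_of_finRange_eq hst, hupper, hlower a ha,
    hlower _ (add_mem ha (single_mem_vanishingBelow le_rfl c))]
  simp [zpow_add, mul_assoc]

theorem descWord_single (i : Fin n) (c : ℤ) : descWord (Pi.single i c) = of i ^ c := by
  simpa [descWord_zero] using descWord_add_single (zero_mem (vanishingBelow i)) c

theorem tailWord_congr {i : Fin n} {k k' : Fin n → ℤ} (h : ∀ l, i ≤ l → k l = k' l) :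
    tailWord n i k = tailWord n i k' := by
  unfold tailWord
  congr 1
  exact List.map_congr_left fun l hl => by
    rw [h l (by simpa using (List.mem_filter.1 hl).2)]

theorem tailWord_neg {i : Fin n} {a : Fin n → ℤ} (ha : a ∈ vanishingBelow i) :
    tailWord n i (-a) = (descWord a)⁻¹ := by
  obtain ⟨s, t, hst, hs, ht⟩ := finRange_eq_append i
  have hfilter : ((List.finRange n).filter fun l => i ≤ l) = i :: t := by
    rw [hst, List.filter_append, List.filter_eq_nil_iff.2 fun l hl => by simpa using hs l hl,
      List.filter_eq_self.2 fun l hl => ?_]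
    · rfl
    · rcases List.mem_cons.1 hl with rfl | hl
      · simp
      · simpa using (ht l hl).le
  rw [tailWord, hfilter, descWord_eq_of_finRange_eq hst,
    prod_map_zpow_eq_one fun l hl => ha l (hs l (List.mem_reverse.1 hl)), mul_one]
  simp [List.prod_inv_reverse, Function.comp_def, zpow_neg]

section AlongDescWord

variable {G : Type*} [Group G] {Θ Δ : FreeGroup (Fin n) →* Wreath (Fin n → ℤ) G}

theorem left_zpow_eq (hΘ : ∀ w, (Θ w).right = exponentSum n w)
    (hΔ : ∀ w, (Δ w).right = exponentSum n w) {j : Fin n}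
    (hj : ∀ x ∈ vanishingBelow j, (Θ (of j)).left x = (Δ (of j)).left x)
    (c : ℤ) {x : Fin n → ℤ} (hx : x ∈ vanishingBelow j) :
    (Θ (of j ^ c)).left x = (Δ (of j ^ c)).left x := by
  have hsingle (d : ℤ) := single_mem_vanishingBelow (le_refl j) d
  induction c using Int.induction_on with
  | zero => simp
  | succ c ih =>
    rw [zpow_add_one, map_mul, map_mul, Wreath.left_mul, Wreath.left_mul, ih, hΘ, hΔ,
      exponentSum_of_zpow, hj _ (add_mem hx (hsingle _))]
  | pred c ih =>
    rw [zpow_sub_one, map_mul, map_mul, Wreath.left_mul, Wreath.left_mul, ih, hΘ, hΔ,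
      map_inv, map_inv, Wreath.left_inv, Wreath.left_inv, hΘ, hΔ, exponentSum_of_zpow,
      exponentSum_of, hj _ (sub_mem (add_mem hx (hsingle _)) (hsingle 1))]

/-- `descWord a` is read from `x_{n-1}` down to `x_0`, so each letter `x_j` is read at a
position vanishing below `j`. -/
theorem left_descWord_eq (hΘ : ∀ w, (Θ w).right = exponentSum n w)
    (hΔ : ∀ w, (Δ w).right = exponentSum n w) {i : ℕ} (hi : i ≤ n)
    (hgen : ∀ j : Fin n, i ≤ j → ∀ x ∈ vanishingBelow j,
      (Θ (of j)).left x = (Δ (of j)).left x)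
    {a : Fin n → ℤ} (ha : ∀ l : Fin n, (l : ℕ) < i → a l = 0) :
    (Θ (descWord a)).left 0 = (Δ (descWord a)).left 0 := by
  induction hi using Nat.decreasingInduction generalizing a with
  | self =>
    obtain rfl : a = 0 := funext fun l => ha l l.isLt
    simp [descWord_zero]
  | of_succ k hk ih =>
    set j : Fin n := ⟨k, hk⟩
    set a' := a - Pi.single j (a j)
    have ha' : ∀ l : Fin n, (l : ℕ) < k + 1 → a' l = 0 := fun l hl => by
      rcases eq_or_ne l j with rfl | hne
      · simp [a']
      · have : (l : ℕ) < k := lt_of_le_of_ne (Nat.lt_succ_iff.1 hl) (Fin.val_ne_of_ne hne)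
        simp [a', hne, ha l this]
    have ha'j : a' ∈ vanishingBelow j := fun l hl => ha' l (Nat.lt_succ_of_lt hl)
    have hsplit : descWord a = descWord a' * of j ^ a j := by
      rw [← descWord_add_single ha'j, sub_add_cancel]
    rw [hsplit, map_mul, map_mul, Wreath.left_mul, Wreath.left_mul,
      ih (fun j' hj' => hgen j' (Nat.le_of_succ_le hj')) ha', hΘ, hΔ, exponentSum_descWord,
      toAdd_ofAdd, zero_add, left_zpow_eq hΘ hΔ (hgen j le_rfl) _ ha'j]

end AlongDescWord

open SemidirectProduct (inr rightHom)

def basisElem (i j : Fin n) (k : Fin n → ℤ) : FreeGroup (Fin n) :=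
  (tailWord n i k)⁻¹ * ((of i)⁻¹ * (of j)⁻¹ * of i * of j) * tailWord n i k

def basis (n : ℕ) : Set (FreeGroup (Fin n)) :=
  {g | ∃ i j : Fin n, i < j ∧ ∃ k : Fin n → ℤ, g = basisElem i j k}

theorem basisElem_mem_basis {i j : Fin n} (hij : i < j) (k : Fin n → ℤ) :
    basisElem i j k ∈ basis n :=
  ⟨i, j, hij, k, rfl⟩

open scoped commutatorElement in
theorem basis_subset_commutator : basis n ⊆ commutator (FreeGroup (Fin n)) := by
  rintro _ ⟨i, j, -, k, rfl⟩
  have hcomm : (of i)⁻¹ * (of j)⁻¹ * of i * of j = ⁅(of i)⁻¹, (of j)⁻¹⁆ := by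
    simp [commutatorElement_def]
  rw [basisElem, hcomm]
  refine (Subgroup.commutator_normal ⊤ ⊤).conj_mem' _ ?_ _
  exact Subgroup.commutator_mem_commutator (Subgroup.mem_top _) (Subgroup.mem_top _)

def basisGen {i j : Fin n} (hij : i < j) (k : Fin n → ℤ) : FreeGroup (basis n) :=
  of ⟨basisElem i j k, basisElem_mem_basis hij k⟩

theorem basisGen_congr {i j : Fin n} (hij : i < j) {k k' : Fin n → ℤ}
    (h : ∀ l, i ≤ l → k l = k' l) : basisGen hij k = basisGen hij k' := by
  simp only [basisGen, basisElem, tailWord_congr h]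

theorem lift_basisGen {i j : Fin n} (hij : i < j) (k : Fin n → ℤ) :
    lift ((↑) : basis n → FreeGroup (Fin n)) (basisGen hij k) = basisElem i j k := by
  simp [basisGen]

/-- A letter `x_l` with `l < m`, read at position `y`, contributes the basis element
`basisElem l m (-(y + e_m + e_l))`; letters `x_l` with `m ≤ l` contribute nothing. -/
def schreierGenHom (m : Fin n) :
    FreeGroup (Fin n) →* Wreath (Fin n → ℤ) (FreeGroup (basis n)) :=
  lift fun l =>
    if h : l < m then ⟨fun y => basisGen h (-(y + Pi.single m 1 + Pi.single l 1)),
      ofAdd (Pi.single l 1)⟩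
    else inr (ofAdd (Pi.single l 1))

theorem schreierGenHom_of_left {l m : Fin n} (hlm : l < m) (y : Fin n → ℤ) :
    (schreierGenHom m (of l)).left y =
      basisGen hlm (-(y + Pi.single m 1 + Pi.single l 1)) := by
  simp [schreierGenHom, hlm]

theorem schreierGenHom_right (m : Fin n) (w : FreeGroup (Fin n)) :
    (schreierGenHom m w).right = exponentSum n w :=
  DFunLike.congr_fun (FreeGroup.ext_hom (rightHom.comp (schreierGenHom m)) _ fun l => by
    by_cases h : l < m <;> simp [schreierGenHom, exponentSum, h]) w

def schreierGen (a : Fin n → ℤ) (m : Fin n) : FreeGroup (basis n) :=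
  (schreierGenHom m (descWord a)).left 0

theorem schreierGen_eq_one {m : Fin n} {a : Fin n → ℤ} (ha : a ∈ vanishingBelow m) :
    schreierGen a m = 1 := by
  have := left_descWord_eq (Δ := inr.comp (exponentSum n)) (schreierGenHom_right m)
    (fun _ => rfl) m.isLt.le
    (fun j hj x _ => by simp [schreierGenHom, show ¬ j < m from not_lt.2 hj])
    (a := a) fun l hl => ha l hl
  simpa [schreierGen] using this

theorem schreierGen_add_single {i m : Fin n} (him : i < m) {a : Fin n → ℤ}
    (ha : a ∈ vanishingBelow i) :
    schreierGen (a + Pi.single i 1) m =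
      schreierGen a m * basisGen him (-(a + Pi.single m 1 + Pi.single i 1)) := by
  rw [schreierGen, schreierGen, descWord_add_single ha, zpow_one, map_mul, Wreath.left_mul,
    schreierGenHom_right, exponentSum_descWord, toAdd_ofAdd, zero_add,
    schreierGenHom_of_left him]

theorem lift_schreierGen (a : Fin n → ℤ) (m : Fin n) :
    lift ((↑) : basis n → FreeGroup (Fin n)) (schreierGen a m) =
      descWord a * of m * (descWord (a + Pi.single m 1))⁻¹ := by
  set ι := lift ((↑) : basis n → FreeGroup (Fin n))
  set u : (Fin n → ℤ) → FreeGroup (Fin n) := fun x => descWord (x + Pi.single m 1) * (of m)⁻¹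
  have hgen (j : Fin n) (x : Fin n → ℤ) (hx : x ∈ vanishingBelow j) :
      (Wreath.mapLeft ι (schreierGenHom m (of j))).left x =
        (Wreath.conjDiag u (exponentSum n) (of j)).left x := by
    rw [Wreath.mapLeft_left, Wreath.conjDiag_left, exponentSum_of]
    by_cases hjm : j < m
    · have hxm : x + Pi.single m 1 ∈ vanishingBelow j :=
        add_mem hx (single_mem_vanishingBelow hjm.le 1)
      rw [schreierGenHom_of_left hjm, lift_basisGen, basisElem,
        tailWord_neg (add_mem hxm (single_mem_vanishingBelow le_rfl 1))]
      simp only [u, add_right_comm x (Pi.single j 1), descWord_add_single hxm, inv_inv,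
        zpow_one]
      group
    · have hmj : m ≤ j := not_lt.1 hjm
      have hxm : x ∈ vanishingBelow m := vanishingBelow_anti hmj hx
      have hxjm : x + Pi.single j 1 ∈ vanishingBelow m :=
        add_mem hxm (single_mem_vanishingBelow hmj 1)
      have hinr : schreierGenHom m (of j) = inr (ofAdd (Pi.single j 1)) := by
        simp [schreierGenHom, hjm]
      simp only [hinr, SemidirectProduct.left_inr, Pi.one_apply, map_one, u,
        descWord_add_single hxm, descWord_add_single hxjm, descWord_add_single hx]
      group
  have := left_descWord_eq (Θ := (Wreath.mapLeft ι).comp (schreierGenHom m))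
    (Δ := Wreath.conjDiag u (exponentSum n)) (fun w => schreierGenHom_right m w)
    (Wreath.conjDiag_right _ _) (Nat.zero_le n) (fun j _ => hgen j) (a := a) (by simp)
  simp only [MonoidHom.comp_apply, Wreath.mapLeft_left, Wreath.conjDiag_left,
    exponentSum_descWord, toAdd_ofAdd, zero_add] at this
  rw [schreierGen, this]
  simp only [u, zero_add, descWord_single, zpow_one]
  group

variable (n) in
def schreierHom : FreeGroup (Fin n) →* Wreath (Fin n → ℤ) (FreeGroup (basis n)) :=
  lift fun m => ⟨fun a => schreierGen a m, ofAdd (Pi.single m 1)⟩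

theorem schreierHom_of_left (m : Fin n) (a : Fin n → ℤ) :
    (schreierHom n (of m)).left a = schreierGen a m := by
  simp [schreierHom]

theorem schreierHom_right (w : FreeGroup (Fin n)) :
    (schreierHom n w).right = exponentSum n w :=
  DFunLike.congr_fun (FreeGroup.ext_hom (rightHom.comp (schreierHom n)) _ fun m => by
    simp [schreierHom, exponentSum]) w

theorem mapLeft_comp_schreierHom :
    (Wreath.mapLeft (lift ((↑) : basis n → FreeGroup (Fin n)))).comp (schreierHom n) =
      Wreath.conjDiag descWord (exponentSum n) :=
  FreeGroup.ext_hom _ _ fun m => SemidirectProduct.ext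
    (funext fun a => by simp [schreierHom, Wreath.conjDiag_left, lift_schreierGen])
    (by simp [schreierHom, Wreath.conjDiag, Wreath.diag, exponentSum])

theorem schreierHom_descWord_left (a : Fin n → ℤ) :
    (schreierHom n (descWord a)).left 0 = 1 := by
  simpa using left_descWord_eq (Δ := inr.comp (exponentSum n)) schreierHom_right
    (fun _ => rfl) (Nat.zero_le n)
    (fun j _ x hx => by simp [schreierHom_of_left, schreierGen_eq_one hx]) (a := a) (by simp)

theorem schreierHom_commutator_left {i j : Fin n} (hij : i < j) {a : Fin n → ℤ}
    (ha : a ∈ vanishingBelow i) :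
    (schreierHom n ((of i)⁻¹ * (of j)⁻¹ * of i * of j)).left a = basisGen hij (-a) := by
  simp only [map_mul, map_inv, Wreath.left_mul, Wreath.left_inv, schreierHom_of_left,
    SemidirectProduct.mul_right, SemidirectProduct.inv_right, schreierHom_right,
    exponentSum_of, toAdd_mul, toAdd_inv]
  set y := a - Pi.single j 1 - Pi.single i 1
  have hy : y ∈ vanishingBelow i := sub_mem (sub_mem ha (single_mem_vanishingBelow hij.le 1))
    (single_mem_vanishingBelow le_rfl 1)
  rw [show a + -Pi.single i 1 - Pi.single j 1 = y by simp only [y]; abel,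
    show a + (-Pi.single i 1 + -Pi.single j 1) = y by simp only [y]; abel,
    show a + (-Pi.single i 1 + -Pi.single j 1 + Pi.single i 1) = y + Pi.single i 1 by
      simp only [y]; abel,
    schreierGen_add_single hij hy, schreierGen_eq_one hy,
    schreierGen_eq_one (sub_mem ha (single_mem_vanishingBelow le_rfl 1)),
    show -(y + Pi.single j 1 + Pi.single i 1) = -a by simp only [y]; abel]
  group

theorem schreierHom_basisElem_left {i j : Fin n} (hij : i < j) (k : Fin n → ℤ) :
    (schreierHom n (basisElem i j k)).left 0 = basisGen hij k := by
  set a : Fin n → ℤ := fun l => if i ≤ l then -k l else 0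
  have ha : a ∈ vanishingBelow i := fun l hl => if_neg (not_le.2 hl)
  have hka (l : Fin n) (hl : i ≤ l) : k l = (-a) l := by simp [a, hl]
  have hcomm : exponentSum n ((of i)⁻¹ * (of j)⁻¹ * of i * of j) = 1 := by simp [mul_comm]
  rw [basisElem, tailWord_congr hka, tailWord_neg ha, inv_inv, map_mul, map_mul, map_inv,
    Wreath.left_conj (by rw [schreierHom_right, hcomm]), schreierHom_descWord_left,
    schreierHom_right, exponentSum_descWord, toAdd_ofAdd, zero_add,
    schreierHom_commutator_left hij ha, basisGen_congr hij hka]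
  group

variable (n) in
def retraction : commutator (FreeGroup (Fin n)) →* FreeGroup (basis n) :=
  (Pi.evalMonoidHom _ 0).comp <|
    SemidirectProduct.leftHomOfRightEqOne ((schreierHom n).comp (commutator _).subtype)
      fun h => by
        simpa [schreierHom_right] using Abelianization.commutator_subset_ker (exponentSum n) h.2

theorem retraction_basis (s : basis n) :
    retraction n ⟨s, basis_subset_commutator s.2⟩ = of s := by
  obtain ⟨_, i, j, hij, k, rfl⟩ := s
  exact schreierHom_basisElem_left hij k

theorem lift_retraction (h : commutator (FreeGroup (Fin n))) :
    lift ((↑) : basis n → FreeGroup (Fin n)) (retraction n h) = h := by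
  change lift _ ((schreierHom n h).left 0) = (h : FreeGroup (Fin n))
  have hab : exponentSum n h = 1 := Abelianization.commutator_subset_ker (exponentSum n) h.2
  have := congr_arg (fun p : Wreath (Fin n → ℤ) (FreeGroup (Fin n)) => p.left 0)
    (DFunLike.congr_fun mapLeft_comp_schreierHom (h : FreeGroup (Fin n)))
  simpa [Wreath.conjDiag_left, hab, descWord_zero] using this

end Tomaszewski

theorem stmt7_general (n : ℕ) :
    IsFreeBasis
      {g : FreeGroup (Fin n) | ∃ i j : Fin n, i < j ∧ ∃ k : Fin n → ℤ,
        g = (tailWord n i k)⁻¹ *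
              ((FreeGroup.of i)⁻¹ * (FreeGroup.of j)⁻¹ * FreeGroup.of i * FreeGroup.of j) *
            tailWord n i k}
      (commutator (FreeGroup (Fin n))) :=
  IsFreeBasis.of_retraction Tomaszewski.basis_subset_commutator (Tomaszewski.retraction n)
    Tomaszewski.retraction_basis Tomaszewski.lift_retraction

/-- Tomaszewski's theorem: for `n ≥ 1`, the commutator subgroup of the free group `Fₙ`
on `x_0, …, x_{n-1}` is freely generated by the elements
`(x_i^{k_i} ⋯ x_{n-1}^{k_{n-1}})⁻¹ [x_i, x_j] (x_i^{k_i} ⋯ x_{n-1}^{k_{n-1}})`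
for `i < j` and integers `k_i, …, k_{n-1}`. -/
theorem stmt7 (n : ℕ) (hn : 1 ≤ n) :
    IsFreeBasis
      {g : FreeGroup (Fin n) | ∃ i j : Fin n, i < j ∧ ∃ k : Fin n → ℤ,
        g = (tailWord n i k)⁻¹ *
              ((FreeGroup.of i)⁻¹ * (FreeGroup.of j)⁻¹ * FreeGroup.of i * FreeGroup.of j) *
            tailWord n i k}
      (commutator (FreeGroup (Fin n))) :=
  stmt7_general n
end
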